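/- Let n ≥ 2 and for i = 1,…,n define ψᵢ: ℝ³ → ℝ³ by ψᵢ(x,y,z) = ((x + 2i − 2)/(2n−1), y/(2n−1), z/(2n−1)). Then the attractor 𝒞ₙ of {ψ₁,…,ψₙ} is a compact, uniformly perfect, and uniformly disconnected subset of ℝ³. -/

import Mathlib

open Metric Set

/-- The contracting similarities `ψᵢ(x,y,z) = ((x + 2i - 2)/(2n-1), y/(2n-1), z/(2n-1))`,
`i = 1, …, n` (indexed here by `i : Fin n`, so `i = 0, …, n-1` gives the shift `2i`). -/
noncomputable def psi (n : ℕ) (i : Fin n) (x : EuclideanSpace ℝ (Fin 3)) :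
    EuclideanSpace ℝ (Fin 3) :=
  (2 * (n : ℝ) - 1)⁻¹ • (x + EuclideanSpace.single (0 : Fin 3) (2 * (i : ℕ) : ℝ))

/-- The set `X` is `c`-uniformly perfect: for every `x ∈ X` and every `r ∈ (0, diam X)`,
the set `B(x,r) \ B(x, r/c)` (taken within `X`) is nonempty. -/
def UniformlyPerfectOn {α : Type*} [PseudoMetricSpace α] (c : ℝ) (X : Set α) : Prop :=
  ∀ x ∈ X, ∀ r : ℝ, 0 < r → r < Metric.diam X →
    ∃ y ∈ X, dist y x < r ∧ r / c ≤ dist y x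

/-- The set `X` is `C`-uniformly disconnected: for every `x ∈ X` and every
`r ∈ (0, diam X)` there is `E ⊆ X` with `x ∈ E`, `diam E ≤ r` and `dist(E, X \ E) ≥ r / C`. -/
def UniformlyDisconnectedOn {α : Type*} [PseudoMetricSpace α] (C : ℝ) (X : Set α) : Prop :=
  ∀ x ∈ X, ∀ r : ℝ, 0 < r → r < Metric.diam X →
    ∃ E : Set α, E ⊆ X ∧ x ∈ E ∧ Metric.diam E ≤ r ∧
      ∀ a ∈ E, ∀ b ∈ X \ E, r / C ≤ dist a b
/-!
The segment `[0,1]·e₀` is invariant under every `ψᵢ`, so it contains every bounded set `X` with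
`X ⊆ ⋃ ψᵢ(X)`; on it the pieces `ψᵢ(𝒞ₙ)` lie in the intervals `[2i, 2i+1]/(2n-1)`, which are
`ρ = 1/(2n-1)` apart. Iterating, every point lies in a cylinder `ψ_w(𝒞ₙ)`, `|w| = k`, of diameter
at most `ρᵏ` and at distance at least `ρᵏ` from the rest of `𝒞ₙ`, and two of its subcylinders are
`ρᵏ⁺¹` apart. For `ρᵏ⁺¹ < r ≤ ρᵏ` a level-`(k+1)` cylinder witnesses uniform disconnectedness with
`C = 1/ρ`, and a point in a sibling subcylinder witnesses uniform perfectness with `c = 1/ρ²`.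
-/

section SelfSimilar

variable {α ι : Type*} (f : ι → α → α)

def wordMap : List ι → α → α
  | [] => id
  | i :: w => f i ∘ wordMap w

@[simp]
lemma wordMap_nil : wordMap f [] = id := rfl

@[simp]
lemma wordMap_cons (i : ι) (w : List ι) : wordMap f (i :: w) = f i ∘ wordMap f w := rfl

variable {f}

lemma mapsTo_wordMap {X : Set α} (h : ∀ i, MapsTo (f i) X X) :
    ∀ w : List ι, MapsTo (wordMap f w) X X
  | [] => mapsTo_id X
  | i :: w => (h i).comp (mapsTo_wordMap h w)

lemma exists_wordMap_eq {X : Set α} (hX : X ⊆ ⋃ i, f i '' X) :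
    ∀ (k : ℕ), ∀ x ∈ X, ∃ w : List ι, w.length = k ∧ ∃ y ∈ X, wordMap f w y = x
  | 0, x, hx => ⟨[], rfl, x, hx, rfl⟩
  | k + 1, x, hx => by
    obtain ⟨i, y, hy, rfl⟩ := mem_iUnion.mp (hX hx)
    obtain ⟨w, rfl, z, hz, rfl⟩ := exists_wordMap_eq hX k y hy
    exact ⟨i :: w, rfl, z, hz, rfl⟩

variable [MetricSpace α] {ρ : ℝ}

lemma dist_wordMap (hf : ∀ i x y, dist (f i x) (f i y) = ρ * dist x y) :
    ∀ (w : List ι) (x y : α), dist (wordMap f w x) (wordMap f w y) = ρ ^ w.length * dist x y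
  | [], x, y => by simp
  | i :: w, x, y => by
    simp only [wordMap_cons, Function.comp_apply, hf, dist_wordMap hf w, List.length_cons, pow_succ]
    ring

lemma subset_of_subset_iUnion_image {X K : Set α} (hρ0 : 0 ≤ ρ) (hρ1 : ρ < 1)
    (hf : ∀ i x y, dist (f i x) (f i y) = ρ * dist x y) (hX : X ⊆ ⋃ i, f i '' X)
    (hXb : Bornology.IsBounded X) (hK : IsClosed K) (hKne : K.Nonempty)
    (hfK : ∀ i, MapsTo (f i) K K) : X ⊆ K := by
  obtain ⟨z, hz⟩ := hKne
  obtain ⟨R, hR0, hR⟩ := hXb.subset_closedBall_lt 0 z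
  intro x hx
  rw [← hK.closure_eq, Metric.mem_closure_iff]
  intro ε hε
  obtain ⟨k, hk⟩ := exists_pow_lt_of_lt_one (div_pos hε hR0) hρ1
  obtain ⟨w, rfl, y, hy, rfl⟩ := exists_wordMap_eq hX k x hx
  refine ⟨wordMap f w z, mapsTo_wordMap hfK w hz, ?_⟩
  calc dist (wordMap f w y) (wordMap f w z) = ρ ^ w.length * dist y z := dist_wordMap hf w y z
    _ ≤ ρ ^ w.length * R := by gcongr; exact mem_closedBall.mp (hR hy)
    _ < ε := (lt_div_iff₀ hR0).mp hk

structure IsSeparatedSelfSimilar (f : ι → α → α) (ρ : ℝ) (X : Set α) : Prop where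
  ratio_pos : 0 < ρ
  ratio_lt_one : ρ < 1
  dist_map : ∀ i x y, dist (f i x) (f i y) = ρ * dist x y
  eq_iUnion : X = ⋃ i, f i '' X
  dist_le_one : ∀ a ∈ X, ∀ b ∈ X, dist a b ≤ 1
  separated : Pairwise fun i j => ∀ a ∈ X, ∀ b ∈ X, ρ ≤ dist (f i a) (f j b)

namespace IsSeparatedSelfSimilar

variable {X : Set α} (h : IsSeparatedSelfSimilar f ρ X)
include h

lemma mapsTo (i : ι) : MapsTo (f i) X X := fun x hx => by
  rw [h.eq_iUnion]
  exact mem_iUnion.mpr ⟨i, mem_image_of_mem _ hx⟩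

lemma le_dist_wordMap {w w' : List ι} (hlen : w.length = w'.length) (hne : w ≠ w') {a b : α}
    (ha : a ∈ X) (hb : b ∈ X) : ρ ^ w.length ≤ dist (wordMap f w a) (wordMap f w' b) := by
  have hρ := h.ratio_pos
  induction w generalizing w' with
  | nil => cases w' with
    | nil => exact absurd rfl hne
    | cons => simp at hlen
  | cons i u ih => cases w' with
    | nil => simp at hlen
    | cons i' u' =>
      simp only [wordMap_cons, Function.comp_apply, List.length_cons, pow_succ]
      by_cases hii : i = i'
      · subst hii
        rw [h.dist_map, mul_comm]
        gcongr
        exact ih (by simpa using hlen) (fun hu => hne (by rw [hu]))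
      · calc ρ ^ u.length * ρ ≤ 1 * ρ := by
              gcongr
              exact pow_le_one₀ hρ.le h.ratio_lt_one.le
          _ ≤ _ := by
              rw [one_mul]
              exact h.separated hii _ (mapsTo_wordMap h.mapsTo u ha) _
                (mapsTo_wordMap h.mapsTo u' hb)

lemma diam_le_one : Metric.diam X ≤ 1 := diam_le_of_forall_dist_le zero_le_one h.dist_le_one

lemma uniformlyDisconnectedOn : UniformlyDisconnectedOn ρ⁻¹ X := by
  intro x hx r hr0 hrX
  have hρ := h.ratio_pos
  obtain ⟨k, hk, hk'⟩ :=
    exists_nat_pow_near_of_lt_one hr0 (hrX.trans_le h.diam_le_one).le hρ h.ratio_lt_one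
  obtain ⟨w, hw, y, hy, rfl⟩ := exists_wordMap_eq h.eq_iUnion.le (k + 1) x hx
  refine ⟨wordMap f w '' X, (mapsTo_wordMap h.mapsTo w).image_subset, mem_image_of_mem _ hy,
    diam_le_of_forall_dist_le hr0.le ?_, ?_⟩
  · rintro _ ⟨a, ha, rfl⟩ _ ⟨b, hb, rfl⟩
    rw [dist_wordMap h.dist_map, hw]
    calc ρ ^ (k + 1) * dist a b ≤ ρ ^ (k + 1) * 1 := by gcongr; exact h.dist_le_one a ha b hb
      _ ≤ r := by rw [mul_one]; exact hk.le
  · rintro _ ⟨a, ha, rfl⟩ b ⟨hb, hbE⟩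
    obtain ⟨w', hw', b', hb', rfl⟩ := exists_wordMap_eq h.eq_iUnion.le (k + 1) b hb
    have hne : w ≠ w' := by
      rintro rfl
      exact hbE (mem_image_of_mem _ hb')
    calc r / ρ⁻¹ = ρ * r := by rw [div_inv_eq_mul, mul_comm]
      _ ≤ ρ * ρ ^ k := by gcongr
      _ = ρ ^ w.length := by rw [hw, pow_succ']
      _ ≤ _ := h.le_dist_wordMap (hw.trans hw'.symm) hne ha hb'

lemma uniformlyPerfectOn [Nontrivial ι] : UniformlyPerfectOn (ρ ^ 2)⁻¹ X := by
  intro x hx r hr0 hrX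
  have hρ := h.ratio_pos
  obtain ⟨k, hk, hk'⟩ :=
    exists_nat_pow_near_of_lt_one hr0 (hrX.trans_le h.diam_le_one).le hρ h.ratio_lt_one
  obtain ⟨w, hw, y, hy, rfl⟩ := exists_wordMap_eq h.eq_iUnion.le (k + 1) x hx
  obtain ⟨i, z, hz, rfl⟩ := mem_iUnion.mp (h.eq_iUnion.le hy)
  obtain ⟨j, hji⟩ := exists_ne i
  refine ⟨wordMap f w (f j z), mapsTo_wordMap h.mapsTo w (h.mapsTo j hz), ?_, ?_⟩
  all_goals rw [dist_wordMap h.dist_map]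
  · calc ρ ^ w.length * dist (f j z) (f i z) ≤ ρ ^ w.length * 1 := by
          gcongr
          exact h.dist_le_one _ (h.mapsTo j hz) _ (h.mapsTo i hz)
      _ < r := by rw [mul_one, hw]; exact hk
  · calc r / (ρ ^ 2)⁻¹ = ρ ^ 2 * r := by rw [div_inv_eq_mul, mul_comm]
      _ ≤ ρ ^ 2 * ρ ^ k := by gcongr
      _ = ρ ^ w.length * ρ := by rw [hw]; ring
      _ ≤ _ := by gcongr; exact h.separated hji _ hz _ hz

end IsSeparatedSelfSimilar

end SelfSimilar

section Psi

variable {n : ℕ}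

lemma psi_single (i : Fin n) (t : ℝ) :
    psi n i (EuclideanSpace.single 0 t) =
      EuclideanSpace.single 0 ((2 * (n : ℝ) - 1)⁻¹ * (t + 2 * (i : ℕ))) := by
  ext j
  by_cases hj : j = 0 <;> simp [psi, hj, mul_add]

lemma dist_psi (i : Fin n) (x y : EuclideanSpace ℝ (Fin 3)) :
    dist (psi n i x) (psi n i y) = (2 * (n : ℝ) - 1)⁻¹ * dist x y := by
  have hn : (1 : ℝ) ≤ n := by exact_mod_cast i.pos
  rw [psi, psi, dist_smul₀, dist_add_right, Real.norm_of_nonneg (by simp; linarith)]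

lemma mul_add_two_mul_mem_Icc (i : Fin n) {t : ℝ} (ht : t ∈ Icc 0 1) :
    (2 * (n : ℝ) - 1)⁻¹ * (t + 2 * (i : ℕ)) ∈ Icc 0 1 := by
  have hi : (i : ℝ) + 1 ≤ n := by exact_mod_cast i.isLt
  have hpos : 0 < 2 * (n : ℝ) - 1 := by linarith [ht.1, (Nat.cast_nonneg i : (0 : ℝ) ≤ i)]
  rw [inv_mul_eq_div, mem_Icc, le_div_iff₀ hpos, div_le_iff₀ hpos]
  constructor <;> linarith [ht.1, ht.2, (Nat.cast_nonneg i : (0 : ℝ) ≤ i)]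

lemma one_le_abs_add_two_mul_sub {i j : Fin n} (hij : i ≠ j) {s t : ℝ} (hs : s ∈ Icc 0 1)
    (ht : t ∈ Icc 0 1) : 1 ≤ |(s + 2 * (i : ℕ)) - (t + 2 * (j : ℕ))| := by
  rcases lt_or_gt_of_ne hij with hlt | hlt
  · have : (i : ℝ) + 1 ≤ j := by exact_mod_cast hlt
    rw [abs_sub_comm]
    exact le_abs.mpr (Or.inl (by linarith [hs.2, ht.1]))
  · have : (j : ℝ) + 1 ≤ i := by exact_mod_cast hlt
    exact le_abs.mpr (Or.inl (by linarith [hs.1, ht.2]))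

lemma subset_image_single_Icc (hn : 2 ≤ n) {C : Set (EuclideanSpace ℝ (Fin 3))}
    (hC : C ⊆ ⋃ i, psi n i '' C) (hCb : Bornology.IsBounded C) :
    C ⊆ EuclideanSpace.single 0 '' Icc 0 1 := by
  have hn' : (2 : ℝ) ≤ n := by exact_mod_cast hn
  have hsingle : Isometry (EuclideanSpace.single (0 : Fin 3) : ℝ → _) :=
    Isometry.of_dist_eq (by simp)
  refine subset_of_subset_iUnion_image (inv_pos.mpr (by linarith)).le
    (inv_lt_one_of_one_lt₀ (by linarith)) dist_psi hC hCb
    (isCompact_Icc.image hsingle.continuous).isClosed (by simp) ?_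
  rintro i _ ⟨t, ht, rfl⟩
  exact ⟨_, mul_add_two_mul_mem_Icc i ht, (psi_single i t).symm⟩

lemma isSeparatedSelfSimilar_psi (hn : 2 ≤ n) {C : Set (EuclideanSpace ℝ (Fin 3))}
    (hC : C = ⋃ i, psi n i '' C) (hCb : Bornology.IsBounded C) :
    IsSeparatedSelfSimilar (psi n) (2 * (n : ℝ) - 1)⁻¹ C := by
  have hn' : (2 : ℝ) ≤ n := by exact_mod_cast hn
  have hρ : 0 < (2 * (n : ℝ) - 1)⁻¹ := inv_pos.mpr (by linarith)
  have hCI := subset_image_single_Icc hn hC.le hCb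
  refine ⟨hρ, inv_lt_one_of_one_lt₀ (by linarith), dist_psi, hC, ?_, ?_⟩
  · intro a ha b hb
    obtain ⟨s, hs, rfl⟩ := hCI ha
    obtain ⟨t, ht, rfl⟩ := hCI hb
    simpa using Real.dist_le_of_mem_Icc_01 hs ht
  · intro i j hij a ha b hb
    obtain ⟨s, hs, rfl⟩ := hCI ha
    obtain ⟨t, ht, rfl⟩ := hCI hb
    rw [psi_single, psi_single, PiLp.dist_single_same, Real.dist_eq, ← mul_sub, abs_mul,
      abs_of_pos hρ]
    exact le_mul_of_one_le_right hρ.le (one_le_abs_add_two_mul_sub hij hs ht)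

end Psi

theorem psi_attractor_uniformly_perfect_and_disconnected_general
    (n : ℕ) (hn : 2 ≤ n)
    (Cn : Set (EuclideanSpace ℝ (Fin 3))) (hCcomp : IsCompact Cn)
    (hCinv : Cn = ⋃ i, psi n i '' Cn) :
    IsCompact Cn ∧ (∃ c : ℝ, 1 < c ∧ UniformlyPerfectOn c Cn) ∧
      (∃ C : ℝ, 1 ≤ C ∧ UniformlyDisconnectedOn C Cn) := by
  have h := isSeparatedSelfSimilar_psi hn hCinv hCcomp.isBounded
  have : Nontrivial (Fin n) := Fin.nontrivial_iff_two_le.mpr hn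
  have hρ2 : 0 < (2 * (n : ℝ) - 1)⁻¹ ^ 2 := pow_pos h.ratio_pos 2
  refine ⟨hCcomp, ⟨_, (one_lt_inv₀ hρ2).mpr ?_, h.uniformlyPerfectOn⟩,
    ⟨_, (one_le_inv₀ h.ratio_pos).mpr h.ratio_lt_one.le, h.uniformlyDisconnectedOn⟩⟩
  exact pow_lt_one₀ h.ratio_pos.le h.ratio_lt_one two_ne_zero

/-- For `n ≥ 2`, the attractor `𝒞ₙ` of `{ψ₁, …, ψₙ}` is a compact, uniformly perfect and
uniformly disconnected subset of `ℝ³`. -/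
theorem psi_attractor_uniformly_perfect_and_disconnected
    (n : ℕ) (hn : 2 ≤ n)
    (Cn : Set (EuclideanSpace ℝ (Fin 3))) (hCne : Cn.Nonempty) (hCcomp : IsCompact Cn)
    (hCinv : Cn = ⋃ i, psi n i '' Cn) :
    IsCompact Cn ∧ (∃ c : ℝ, 1 < c ∧ UniformlyPerfectOn c Cn) ∧
      (∃ C : ℝ, 1 ≤ C ∧ UniformlyDisconnectedOn C Cn) :=
  psi_attractor_uniformly_perfect_and_disconnected_general n hn Cn hCcomp hCinv
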